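/- arXiv:2512.20057 — 2 statements merged into one kernel-verified Lean document; each statement's English description precedes it below -/
import Mathlib

section
/- Let H_U and H_V be Hilbert spaces, and let S_U, S_U' be closed subspaces of H_U and S_V, S_V' be closed subspaces of H_V. Then the intersection of the tensor product subspaces satisfies (S_U ⊗ S_V) ∩ (S_U' ⊗ S_V') = (S_U ∩ S_U') ⊗ (S_V ∩ S_V'), where S ⊗ T denotes the closed subspace of H_U ⊗ H_V generated by elementary tensors f ⊗ g with f ∈ S, g ∈ T. -/
open scoped RealInnerProductSpace

/-- The tensor product of two subspaces: the closure of the span of elementary tensors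
`tp f g` with `f ∈ S`, `g ∈ T`, inside the Hilbert tensor product `W`. -/
noncomputable def tensorSubspace {U V W : Type*}
    [NormedAddCommGroup U] [InnerProductSpace ℝ U]
    [NormedAddCommGroup V] [InnerProductSpace ℝ V]
    [NormedAddCommGroup W] [InnerProductSpace ℝ W]
    (tp : U →ₗ[ℝ] V →ₗ[ℝ] W) (S : Submodule ℝ U) (T : Submodule ℝ V) : Submodule ℝ W :=
  (Submodule.span ℝ {w : W | ∃ f ∈ S, ∃ g ∈ T, w = tp f g}).topologicalClosure

/-!
For `f : U` let `slice f : W → V` be the adjoint of `g ↦ tp f g`, so that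
`⟪slice f w, g⟫ = ⟪w, tp f g⟫`. If `w ∈ S ⊗ T` with `T` closed, every slice of `w` lies in `T`,
because `w` is orthogonal to `tp f g` for `g ∈ Tᗮ`. Conversely, if `w ∈ C ⊗ V` has all its slices
along `C` in `T`, the component `r` of `w` orthogonal to `C ⊗ T` has its slices along `C` in
`T ⊓ Tᗮ = ⊥`; hence `r` is orthogonal to `C ⊗ V`, which contains it, and `r = 0`.
An element of both `SU ⊗ SV` and `SU' ⊗ SV'` has its slices in the first factor in `SU ⊓ SU'`,
so it lies in `(SU ⊓ SU') ⊗ V`, and its slices in the second factor in `SV ⊓ SV'`.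
-/

open Submodule

section

variable {U V W : Type*}
    [NormedAddCommGroup U] [InnerProductSpace ℝ U]
    [NormedAddCommGroup V] [InnerProductSpace ℝ V]
    [NormedAddCommGroup W] [InnerProductSpace ℝ W]

def IsInnerTensor (tp : U →ₗ[ℝ] V →ₗ[ℝ] W) : Prop :=
  ∀ (f₁ : U) (g₁ : V) (f₂ : U) (g₂ : V), ⟪tp f₁ g₁, tp f₂ g₂⟫ = ⟪f₁, f₂⟫ * ⟪g₁, g₂⟫

theorem tensorSubspace_mono (tp : U →ₗ[ℝ] V →ₗ[ℝ] W) {S S' : Submodule ℝ U}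
    {T T' : Submodule ℝ V} (hS : S ≤ S') (hT : T ≤ T') :
    tensorSubspace tp S T ≤ tensorSubspace tp S' T' :=
  topologicalClosure_mono <| span_mono fun _ ⟨f, hf, g, hg, hw⟩ => ⟨f, hS hf, g, hT hg, hw⟩

theorem tensorSubspace_flip (tp : U →ₗ[ℝ] V →ₗ[ℝ] W) (S : Submodule ℝ U)
    (T : Submodule ℝ V) : tensorSubspace tp.flip T S = tensorSubspace tp S T := by
  simp only [tensorSubspace, LinearMap.flip_apply]
  congr 3
  ext w
  exact ⟨fun ⟨g, hg, f, hf, hw⟩ => ⟨f, hf, g, hg, hw⟩, fun ⟨f, hf, g, hg, hw⟩ => ⟨g, hg, f, hf, hw⟩⟩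

theorem apply_mem_tensorSubspace (tp : U →ₗ[ℝ] V →ₗ[ℝ] W) {S : Submodule ℝ U}
    {T : Submodule ℝ V} {f : U} {g : V} (hf : f ∈ S) (hg : g ∈ T) :
    tp f g ∈ tensorSubspace tp S T :=
  le_topologicalClosure _ (subset_span ⟨f, hf, g, hg, rfl⟩)

variable {tp : U →ₗ[ℝ] V →ₗ[ℝ] W}

theorem mem_orthogonal_tensorSubspace_iff {S : Submodule ℝ U} {T : Submodule ℝ V} {x : W} :
    x ∈ (tensorSubspace tp S T)ᗮ ↔ ∀ f ∈ S, ∀ g ∈ T, ⟪tp f g, x⟫ = 0 := by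
  simp only [tensorSubspace, orthogonal_closure, mem_orthogonal]
  refine ⟨fun h f hf g hg => h _ (subset_span ⟨f, hf, g, hg, rfl⟩), fun h u hu => ?_⟩
  induction hu using span_induction with
  | mem u hu => obtain ⟨f, hf, g, hg, rfl⟩ := hu; exact h f hf g hg
  | zero => exact inner_zero_left _
  | add u v _ _ hu hv => rw [inner_add_left, hu, hv, add_zero]
  | smul c u _ hu => rw [real_inner_smul_left, hu, mul_zero]

namespace IsInnerTensor

theorem flip (htp : IsInnerTensor tp) : IsInnerTensor tp.flip := fun g₁ f₁ g₂ f₂ => by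
  rw [LinearMap.flip_apply, LinearMap.flip_apply, htp, mul_comm]

theorem norm_apply (htp : IsInnerTensor tp) (f : U) (g : V) : ‖tp f g‖ = ‖f‖ * ‖g‖ := by
  have h := htp f g f g
  simp only [real_inner_self_eq_norm_sq, ← mul_pow] at h
  exact (pow_left_inj₀ (norm_nonneg _) (by positivity) two_ne_zero).mp h

variable [CompleteSpace V] [CompleteSpace W]

noncomputable def slice (htp : IsInnerTensor tp) (f : U) : W →L[ℝ] V :=
  ((tp f).mkContinuous ‖f‖ fun g => (htp.norm_apply f g).le).adjoint

theorem inner_slice_left (htp : IsInnerTensor tp) (f : U) (w : W) (g : V) :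
    ⟪htp.slice f w, g⟫ = ⟪w, tp f g⟫ :=
  ContinuousLinearMap.adjoint_inner_left _ g w

theorem slice_mem (htp : IsInnerTensor tp) {S : Submodule ℝ U} {T : Submodule ℝ V}
    (hT : IsClosed (T : Set V)) {w : W} (hw : w ∈ tensorSubspace tp S T) (f : U) :
    htp.slice f w ∈ T := by
  have : CompleteSpace T := hT.completeSpace_coe
  rw [← T.orthogonal_orthogonal, mem_orthogonal']
  intro g hg
  rw [inner_slice_left]
  refine inner_right_of_mem_orthogonal hw (mem_orthogonal_tensorSubspace_iff.mpr ?_)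
  intro f' _ g' hg'
  rw [htp, inner_right_of_mem_orthogonal hg' hg, mul_zero]

theorem eq_zero_of_slice_eq_zero (htp : IsInnerTensor tp) {C : Submodule ℝ U} {r : W}
    (hr : r ∈ tensorSubspace tp C ⊤) (h : ∀ f ∈ C, htp.slice f r = 0) : r = 0 := by
  refine inner_self_eq_zero.mp (mem_orthogonal_tensorSubspace_iff.mpr ?_ r hr)
  intro f hf g _
  rw [real_inner_comm, ← inner_slice_left htp, h f hf, inner_zero_left]

theorem mem_tensorSubspace_of_slice_mem (htp : IsInnerTensor tp) {C : Submodule ℝ U}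
    {T : Submodule ℝ V} (hT : IsClosed (T : Set V)) {w : W} (hw : w ∈ tensorSubspace tp C ⊤)
    (hslice : ∀ f ∈ C, htp.slice f w ∈ T) : w ∈ tensorSubspace tp C T := by
  set K := tensorSubspace tp C T
  have : CompleteSpace K := (isClosed_topologicalClosure _).completeSpace_coe
  have hk : K.starProjection w ∈ K := K.starProjection_apply_mem w
  have hr : w - K.starProjection w ∈ Kᗮ := K.sub_starProjection_mem_orthogonal w
  set r := w - K.starProjection w
  suffices r = 0 by rwa [← sub_eq_zero.mp this] at hk
  refine htp.eq_zero_of_slice_eq_zero (sub_mem hw (tensorSubspace_mono tp le_rfl le_top hk))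
    fun f hf => ?_
  have hrT : htp.slice f r ∈ T := by
    rw [map_sub]
    exact sub_mem (hslice f hf) (htp.slice_mem hT hk f)
  have hrT' : htp.slice f r ∈ Tᗮ := by
    refine (mem_orthogonal' _ _).mpr fun g hg => ?_
    rw [inner_slice_left]
    exact inner_left_of_mem_orthogonal (apply_mem_tensorSubspace tp hf hg) hr
  simpa [T.inf_orthogonal_eq_bot] using mem_inf.mpr ⟨hrT, hrT'⟩

end IsInnerTensor

end

/-- Proposition (intersection of Tucker-form tensor subspaces):
`(S_U ⊗ S_V) ⊓ (S_U' ⊗ S_V') = (S_U ⊓ S_U') ⊗ (S_V ⊓ S_V')`. -/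
theorem tensor_subspace_inter {U V W : Type*}
    [NormedAddCommGroup U] [InnerProductSpace ℝ U] [CompleteSpace U]
    [NormedAddCommGroup V] [InnerProductSpace ℝ V] [CompleteSpace V]
    [NormedAddCommGroup W] [InnerProductSpace ℝ W] [CompleteSpace W]
    (tp : U →ₗ[ℝ] V →ₗ[ℝ] W)
    (htp : ∀ (f₁ : U) (g₁ : V) (f₂ : U) (g₂ : V),
      ⟪tp f₁ g₁, tp f₂ g₂⟫ = ⟪f₁, f₂⟫ * ⟪g₁, g₂⟫)
    (SU SU' : Submodule ℝ U) (SV SV' : Submodule ℝ V)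
    (hSU : IsClosed (SU : Set U)) (hSU' : IsClosed (SU' : Set U))
    (hSV : IsClosed (SV : Set V)) (hSV' : IsClosed (SV' : Set V)) :
    tensorSubspace tp SU SV ⊓ tensorSubspace tp SU' SV'
      = tensorSubspace tp (SU ⊓ SU') (SV ⊓ SV') := by
  have htp : IsInnerTensor tp := htp
  refine le_antisymm (fun w hw => ?_)
    (le_inf (tensorSubspace_mono tp inf_le_left inf_le_left)
      (tensorSubspace_mono tp inf_le_right inf_le_right))
  obtain ⟨hw, hw'⟩ := mem_inf.mp hw
  have hwU : w ∈ tensorSubspace tp (SU ⊓ SU') ⊤ := by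
    rw [← tensorSubspace_flip] at hw hw' ⊢
    exact htp.flip.mem_tensorSubspace_of_slice_mem (hSU.inter hSU')
      (tensorSubspace_mono _ le_top le_top hw)
      fun g _ => ⟨htp.flip.slice_mem hSU hw g, htp.flip.slice_mem hSU' hw' g⟩
  exact htp.mem_tensorSubspace_of_slice_mem (hSV.inter hSV') hwU
    fun f _ => ⟨htp.slice_mem hSV hw f, htp.slice_mem hSV' hw' f⟩
end

section
/- Let P ∈ ℝ^{m×m} be a symmetric idempotent (projection) matrix, let K ∈ ℝ^{m×m} be symmetric positive definite, and set G = P K P. Then the column space of G equals the column space of P, and consequently G G† = P, where G† is the Moore–Penrose pseudoinverse of G. -/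
open Matrix

/-! The kernel of `P K P` is that of `P`, since `xᵀ P K P x = (P x)ᵀ K (P x)`; its range lies in
that of `P`, so rank–nullity makes the two ranges equal. Then `G B` and `P` are symmetric and each
fixes the other's range (`G B P = P` because `G B G = G` and `range P = range G`; `P G B = G B`
because `P G = G`), and two such matrices coincide: `E = Eᵀ = (F E)ᵀ = E F = F`. -/

/-- `B` is the Moore–Penrose pseudoinverse of `A` (Penrose conditions). -/
def IsMoorePenroseInv {m : Type*} [Fintype m] [DecidableEq m]
    (A B : Matrix m m ℝ) : Prop :=
  A * B * A = A ∧ B * A * B = B ∧ (A * B).IsSymm ∧ (B * A).IsSymm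

theorem LinearMap.range_eq_of_ker_eq_of_range_le {K V W : Type*} [DivisionRing K]
    [AddCommGroup V] [Module K V] [FiniteDimensional K V] [AddCommGroup W] [Module K W]
    {f g : V →ₗ[K] W} (hker : ker f = ker g) (hrange : range f ≤ range g) :
    range f = range g :=
  Submodule.eq_of_le_of_finrank_eq hrange <| by
    have hf := f.finrank_range_add_finrank_ker
    have hg := g.finrank_range_add_finrank_ker
    rw [hker] at hf
    omega

namespace Matrix

variable {m n p R : Type*} [Fintype n]

theorem PosDef.ker_mulVecLin_conjTranspose_mul_mul_same [CommRing R] [PartialOrder R]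
    [StarRing R] [Fintype m] {K : Matrix n n R} (hK : K.PosDef) (A : Matrix n m R) :
    LinearMap.ker (Aᴴ * K * A).mulVecLin = LinearMap.ker A.mulVecLin := by
  ext x
  simp only [LinearMap.mem_ker, mulVecLin_apply]
  refine ⟨fun hx ↦ ?_, fun hx ↦ by rw [← mulVec_mulVec, hx, mulVec_zero]⟩
  by_contra hAx
  have hquad : star (A *ᵥ x) ⬝ᵥ K *ᵥ (A *ᵥ x) = star x ⬝ᵥ (Aᴴ * K * A) *ᵥ x := by
    rw [star_mulVec, ← dotProduct_mulVec, Matrix.mul_assoc, ← mulVec_mulVec, ← mulVec_mulVec]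
  exact (hK.dotProduct_mulVec_pos hAx).ne' (by rw [hquad, hx, dotProduct_zero])

theorem IsHermitian.range_mulVecLin_mul_mul_self [Field R] [PartialOrder R] [StarRing R]
    {A K : Matrix n n R} (hA : A.IsHermitian) (hK : K.PosDef) :
    LinearMap.range (A * K * A).mulVecLin = LinearMap.range A.mulVecLin := by
  refine LinearMap.range_eq_of_ker_eq_of_range_le ?_ ?_
  · simpa only [hA.eq] using hK.ker_mulVecLin_conjTranspose_mul_mul_same A
  · rw [Matrix.mul_assoc, mulVecLin_mul]
    exact LinearMap.range_comp_le_range _ _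

theorem mul_mul_eq_of_range_le [CommSemiring R] [Fintype m] [Fintype p] {A : Matrix m n R}
    {B : Matrix n m R} {C : Matrix m p R} (hABA : A * B * A = A)
    (hC : LinearMap.range C.mulVecLin ≤ LinearMap.range A.mulVecLin) : A * B * C = C := by
  refine ext_iff_mulVec.mpr fun v ↦ ?_
  obtain ⟨w, hw⟩ := hC ⟨v, rfl⟩
  simp only [mulVecLin_apply] at hw
  rw [← mulVec_mulVec, ← hw, mulVec_mulVec, hABA]

theorem IsSymm.eq_of_mul_eq [CommSemiring R] {E F : Matrix n n R} (hE : E.IsSymm)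
    (hF : F.IsSymm) (hEF : E * F = F) (hFE : F * E = E) : E = F :=
  calc E = (F * E)ᵀ := by rw [hFE, hE.eq]
    _ = E * F := by rw [transpose_mul, hE.eq, hF.eq]
    _ = F := hEF

end Matrix

/-- If `P` is a symmetric idempotent (projection) matrix, `K` is symmetric positive definite,
and `G = P K P`, then the column space of `G` equals the column space of `P`, and consequently
`G G† = P`. -/
theorem colspace_PKP_and_GGdag_eq_P {m : ℕ}
    (P K G B : Matrix (Fin m) (Fin m) ℝ)
    (hPsymm : P.IsSymm) (hPidem : P * P = P)
    (hK : K.PosDef)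
    (hG : G = P * K * P)
    (hB : IsMoorePenroseInv G B) :
    LinearMap.range G.mulVecLin = LinearMap.range P.mulVecLin ∧ G * B = P := by
  obtain ⟨hGBG, -, hGBsymm, -⟩ := hB
  have hrange : LinearMap.range G.mulVecLin = LinearMap.range P.mulVecLin :=
    hG ▸ (isHermitian_iff_isSymm.mpr hPsymm).range_mulVecLin_mul_mul_self hK
  have hPG : P * G = G := by rw [hG, ← Matrix.mul_assoc, ← Matrix.mul_assoc, hPidem]
  refine ⟨hrange, hGBsymm.eq_of_mul_eq hPsymm (mul_mul_eq_of_range_le hGBG hrange.ge) ?_⟩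
  rw [← Matrix.mul_assoc, hPG]
end
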